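/- If a profile with an odd number of voters is single-peaked on a tree T (with vertex set equal to the alternatives), then it has a Condorcet winner; specifically, orienting each edge of T according to the majority preference yields an acyclic digraph whose source vertex is a Condorcet winner. -/

import Mathlib

/-- A vote (linear order) over a finite set `A`, encoded as a ranking:
`v a < v b` means `a` is strictly preferred to `b`. -/
abbrev Vote (A : Type*) [Fintype A] := A ≃ Fin (Fintype.card A)

variable {A : Type*} [Fintype A] [DecidableEq A] [Nonempty A]

/-- The top-ranked (most preferred) alternative of a vote. -/
def top (v : Vote A) : A := v.symm ⟨0, Fintype.card_pos⟩

/-- `v` is single-peaked on the graph `G` (thought of as a tree on the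
alternatives): whenever `a` lies on a path in `G` from `top v` to `b`
(with `a ≠ b`), the vote ranks `a` above `b`. -/
def SinglePeakedOnTree (G : SimpleGraph A) (v : Vote A) : Prop :=
  ∀ a b : A, a ≠ b →
    (∃ p : G.Walk (top v) b, p.IsPath ∧ a ∈ p.support) → v a < v b

/-- The strict majority relation. -/
def strictMaj {n : ℕ} (P : Fin n → Vote A) (a b : A) : Prop :=
  (Finset.univ.filter fun i => P i b < P i a).card <
  (Finset.univ.filter fun i => P i a < P i b).card

/-- `c` is a (strong) Condorcet winner. -/
def StrongCondorcetWinner {n : ℕ} (P : Fin n → Vote A) (c : A) : Prop :=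
  ∀ b : A, b ≠ c → strictMaj P c b

namespace SimpleGraph

variable {V : Type*} {G : SimpleGraph V}

/-- The edge `s(c, a)` is a bridge, and a walk from `x` to `a` avoiding `c` cannot contain it,
so any walk from `x` to `c` must. -/
theorem IsAcyclic.mem_support_of_adj_of_notMem_support (hG : G.IsAcyclic) {c a x : V}
    (hca : G.Adj c a) (p : G.Walk x a) (hc : c ∉ p.support) (q : G.Walk x c) :
    a ∈ q.support := by
  have hbridge := isBridge_iff_forall_walk_mem_edges.mp
    (isAcyclic_iff_forall_adj_isBridge.mp hG hca) (q.reverse.append p)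
  rw [Walk.edges_append, List.mem_append, Walk.edges_reverse, List.mem_reverse] at hbridge
  rcases hbridge with hq | hp
  · exact q.snd_mem_support_of_mem_edges hq
  · exact absurd (p.fst_mem_support_of_mem_edges hp) hc

/-- Every orientation of a finite tree has a source: a tree has fewer edges than vertices,
so the vertices cannot all be heads of distinct edges. -/
theorem IsTree.exists_forall_adj_not_rel [Fintype V] (hT : G.IsTree) {r : V → V → Prop}
    (hr : ∀ a b, r a b → ¬ r b a) : ∃ c, ∀ b, G.Adj c b → ¬ r b c := by
  classical
  by_contra! h
  choose pred hadj hpred using h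
  let head : V → G.edgeSet := fun c => ⟨s(pred c, c), (hadj c).symm⟩
  have head_injective : Function.Injective head := by
    intro c d hcd
    rcases Sym2.eq_iff.mp (Subtype.ext_iff.mp hcd) with ⟨-, h⟩ | ⟨hc, hd⟩
    · exact h
    · exact absurd (hc ▸ hpred c) (hr _ _ (hd ▸ hpred d))
  have hcard := Fintype.card_le_of_injective head head_injective
  rw [← hT.card_edgeFinset, ← Set.toFinset_card] at hcard
  simp only [edgeFinset, Nat.add_one_le_iff, lt_self_iff_false] at hcard

end SimpleGraph

open SimpleGraph

section Voting

variable {α : Type*} [Fintype α] {n : ℕ} (P : Fin n → Vote α)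

theorem card_filter_lt_add_card_filter_lt {x y : α} (hxy : x ≠ y) :
    (Finset.univ.filter fun i => P i x < P i y).card +
    (Finset.univ.filter fun i => P i y < P i x).card = n := by
  have hflip : (Finset.univ.filter fun i => P i y < P i x) =
      Finset.univ.filter fun i => ¬ P i x < P i y :=
    Finset.filter_congr fun i _ => ⟨lt_asymm, fun h =>
      (not_lt.mp h).lt_of_ne fun he => hxy ((P i).injective he.symm)⟩
  rw [hflip, Finset.card_filter_add_card_filter_not, Finset.card_univ, Fintype.card_fin]

theorem strictMaj_asymm {a b : α} : strictMaj P a b → ¬ strictMaj P b a := lt_asymm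

theorem strictMaj_or_strictMaj (hodd : Odd n) {a b : α} (hab : a ≠ b) :
    strictMaj P a b ∨ strictMaj P b a := by
  have := card_filter_lt_add_card_filter_lt P hab
  obtain ⟨k, rfl⟩ := hodd
  unfold strictMaj
  omega

theorem strictMaj_of_forall_prefer_imp {x y z : α} (hyx : y ≠ x) (hzx : z ≠ x)
    (hxy : strictMaj P x y) (himp : ∀ i, P i z < P i x → P i y < P i x) :
    strictMaj P x z := by
  have hle : (Finset.univ.filter fun i => P i z < P i x).card ≤
      (Finset.univ.filter fun i => P i y < P i x).card :=
    Finset.card_le_card fun i => by simpa only [Finset.mem_filter] using And.imp_right (himp i)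
  have := card_filter_lt_add_card_filter_lt P hyx.symm
  have := card_filter_lt_add_card_filter_lt P hzx.symm
  unfold strictMaj at *
  omega

end Voting

variable {G : SimpleGraph A}

/-- A voter preferring `b` to `c` has its peak on the `b`-side of the edge `c a` leading from
`c` towards `b`, so it also prefers `a` to `c`. -/
theorem SinglePeakedOnTree.lt_of_adj_of_lt (hT : G.IsTree) {v : Vote A}
    (hv : SinglePeakedOnTree G v) {c a b : A} (hca : G.Adj c a) (p : G.Walk a b)
    (hc : c ∉ p.support) (hbc : v b < v c) : v a < v c := by
  obtain ⟨wb⟩ := hT.connected.preconnected (top v) b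
  obtain ⟨wc⟩ := hT.connected.preconnected (top v) c
  have hcb : c ≠ b := fun h => hc (h ▸ p.end_mem_support)
  have hc_wb : c ∉ wb.bypass.support := fun h =>
    lt_asymm hbc (hv c b hcb ⟨wb.bypass, wb.bypass_isPath, h⟩)
  have ha_wc : a ∈ wc.bypass.support := by
    refine hT.isAcyclic.mem_support_of_adj_of_notMem_support hca (wb.bypass.append p.reverse)
      ?_ wc.bypass
    rw [Walk.mem_support_append_iff, Walk.support_reverse, List.mem_reverse]
    exact not_or.mpr ⟨hc_wb, hc⟩
  exact hv a c hca.ne' ⟨wc.bypass, wc.bypass_isPath, ha_wc⟩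

/-- Compare `c` with `b` through the first vertex `a` on the path from `c` to `b`. -/
theorem strongCondorcetWinner_of_forall_adj_strictMaj {n : ℕ} (hT : G.IsTree)
    {P : Fin n → Vote A} (hsp : ∀ i, SinglePeakedOnTree G (P i)) {c : A}
    (hc : ∀ b, G.Adj c b → strictMaj P c b) : StrongCondorcetWinner P c := by
  intro b hbc
  obtain ⟨w⟩ := hT.connected.preconnected c b
  cases hpath : w.bypass with
  | nil => exact absurd rfl hbc
  | @cons _ a _ hca p =>
    have hc_p : c ∉ p.support := ((Walk.cons_isPath_iff hca p).mp (hpath ▸ w.bypass_isPath)).2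
    exact strictMaj_of_forall_prefer_imp P hca.ne' hbc (hc a hca)
      fun i => (hsp i).lt_of_adj_of_lt hT hca p hc_p

/-- If a profile with an odd number of voters is single-peaked on a tree `G`,
then it has a Condorcet winner; specifically, orienting the edges of `G` by the
majority preference, any source vertex (a vertex that majority-beats all its
neighbors) is a Condorcet winner, and such a vertex exists. -/
theorem condorcet_winner_of_singlePeaked_on_tree {n : ℕ} (hodd : Odd n)
    (G : SimpleGraph A) (hT : G.IsTree)
    (P : Fin n → Vote A) (hsp : ∀ i, SinglePeakedOnTree G (P i)) :
    (∃ c : A, StrongCondorcetWinner P c) ∧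
    ∀ c : A, (∀ b : A, G.Adj c b → strictMaj P c b) → StrongCondorcetWinner P c := by
  have hsource : ∀ c : A, (∀ b, G.Adj c b → strictMaj P c b) → StrongCondorcetWinner P c :=
    fun _ => strongCondorcetWinner_of_forall_adj_strictMaj hT hsp
  obtain ⟨c, hc⟩ := hT.exists_forall_adj_not_rel fun _ _ => strictMaj_asymm P
  refine ⟨⟨c, hsource c fun b hcb => ?_⟩, hsource⟩
  exact (strictMaj_or_strictMaj P hodd hcb.ne).resolve_right (hc b hcb)
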